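/- The set of common neighbors of two adjacent vertices x, y of the bilinear forms graph H_q(D, N−D) has cardinality a_1 = q^{N−D} + q^D − q − 2; equivalently, taking x = 0 and y with (1,1)-entry 1 and zeros elsewhere, the number of matrices w with rank(w) = 1 and rank(w−y) = 1 equals q^{N−D} + q^D − q − 2. -/

import Mathlib

/-!
If `A` and `A - E` both have rank one, `E` the matrix unit at `(i₀, j₀)`, and some row `i ≠ i₀`
of `A` is nonzero, then that row spans the row spaces of both `A` and `A - E`. Hence
`E.row i₀ = A.row i₀ - (A - E).row i₀` lies in the row space of `A`, which it therefore spans,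
so `A` is supported on column `j₀`. Otherwise `A` is supported on row `i₀`. Conversely every matrix supported on row `i₀` or on column `j₀` has
both ranks at most one. So the common neighbours of `0` and `E` are the matrices `≠ 0, E` in the
union of the space of matrices supported on row `i₀` (`q^(N-D)` elements) and that of matrices
supported on column `j₀` (`q^D` elements), which meet in the `q` multiples of `E`.
-/

noncomputable section

open Matrix

/-- The `D × m` matrix with `(1,1)`-entry `1` and all other entries `0`. -/
def yMat (F : Type) [Field F] (D m : ℕ) : Matrix (Fin D) (Fin m) F :=
  Matrix.of fun i j => if (i : ℕ) = 0 ∧ (j : ℕ) = 0 then 1 else 0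

/-- `z` with its first column replaced by zeros. -/
def zeroCol {F : Type} [Field F] {D m : ℕ} (z : Matrix (Fin D) (Fin m) F) :
    Matrix (Fin D) (Fin m) F :=
  Matrix.of fun i j => if (j : ℕ) = 0 then 0 else z i j

/-- `z` with its first row replaced by zeros. -/
def zeroRow {F : Type} [Field F] {D m : ℕ} (z : Matrix (Fin D) (Fin m) F) :
    Matrix (Fin D) (Fin m) F :=
  Matrix.of fun i j => if (i : ℕ) = 0 then 0 else z i j

/-- `z` with both its first row and first column replaced by zeros. -/
def zeroBoth {F : Type} [Field F] {D m : ℕ} (z : Matrix (Fin D) (Fin m) F) :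
    Matrix (Fin D) (Fin m) F :=
  Matrix.of fun i j => if (i : ℕ) = 0 ∨ (j : ℕ) = 0 then 0 else z i j

open Module Submodule

namespace Matrix

variable {F m n : Type*} [Field F]

section

variable [Fintype m] [Fintype n]

theorem rank_eq_zero_iff {A : Matrix m n F} : A.rank = 0 ↔ A = 0 := by
  rw [rank_eq_finrank_span_row, finrank_eq_zero, span_eq_bot, Set.forall_mem_range, ← funext_iff]
  rfl

theorem rank_eq_one_iff {A : Matrix m n F} : A.rank = 1 ↔ A ≠ 0 ∧ A.rank ≤ 1 := by
  rw [Ne, ← rank_eq_zero_iff]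
  omega

theorem row_mem_span_singleton_of_rank_le_one {A : Matrix m n F} (hA : A.rank ≤ 1)
    {x : n → F} (hx : x ∈ span F (Set.range A.row)) (hx0 : x ≠ 0) (k : m) :
    A.row k ∈ span F {x} := by
  have hle : span F {x} ≤ span F (Set.range A.row) := (span_singleton_le_iff_mem _ _).mpr hx
  have heq := eq_of_le_of_finrank_le hle <| by
    rw [finrank_span_singleton hx0, ← rank_eq_finrank_span_row]
    exact hA
  exact heq ▸ subset_span (Set.mem_range_self k)

end

variable [DecidableEq m] [DecidableEq n]

theorem range_vecMulVec_single_inter_range_vecMulVec_single (i₀ : m) (j₀ : n) :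
    Set.range (vecMulVec (Pi.single i₀ (1 : F))) ∩ Set.range (vecMulVec · (Pi.single j₀ 1)) =
      Set.range fun a : F => a • single i₀ j₀ (1 : F) := by
  rw [single_eq_single_vecMulVec_single]
  ext A
  constructor
  · rintro ⟨⟨r, rfl⟩, c, hc⟩
    have hr : r = r j₀ • Pi.single j₀ 1 := by
      ext j
      by_cases hj : j = j₀
      · subst hj; simp
      · simpa [vecMulVec_apply, hj] using (congrFun (congrFun hc i₀) j).symm
    exact ⟨r j₀, by beta_reduce; rw [← vecMulVec_smul, ← hr]⟩
  · rintro ⟨a, rfl⟩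
    exact ⟨⟨a • Pi.single j₀ 1, vecMulVec_smul _ _ _⟩, a • Pi.single i₀ 1, smul_vecMulVec _ _ _⟩

variable [Fintype m] [Fintype n]

theorem exists_eq_vecMulVec_single_of_rank_le_one {A : Matrix m n F} {i₀ i : m} {j₀ : n}
    (hi : i ≠ i₀) (hAi : A.row i ≠ 0) (hA : A.rank ≤ 1) (hAE : (A - single i₀ j₀ 1).rank ≤ 1) :
    ∃ c : m → F, A = vecMulVec c (Pi.single j₀ 1) := by
  have hrow : (A - single i₀ j₀ 1).row i = A.row i := by
    ext j; simp [hi.symm]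
  have hsub : span F {A.row i} ≤ span F (Set.range A.row) :=
    (span_singleton_le_iff_mem _ _).mpr (subset_span (Set.mem_range_self i))
  have hf : (Pi.single j₀ 1 : n → F) ∈ span F (Set.range A.row) := by
    have h := row_mem_span_singleton_of_rank_le_one hAE
      (hrow ▸ subset_span (Set.mem_range_self i)) hAi i₀
    have hdiff : A.row i₀ - (A - single i₀ j₀ 1).row i₀ = Pi.single j₀ 1 := by
      ext j; simp [single_apply, Pi.single_apply, eq_comm]
    exact hdiff ▸ sub_mem (subset_span (Set.mem_range_self i₀)) (hsub h)
  choose c hc using fun k => mem_span_singleton.mp <|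
    row_mem_span_singleton_of_rank_le_one hA hf (Pi.single_ne_zero_iff.mpr one_ne_zero) k
  refine ⟨c, ?_⟩
  ext k j
  exact (congrFun (hc k) j).symm

theorem rank_le_one_and_rank_sub_single_le_one_iff {A : Matrix m n F} {i₀ : m} {j₀ : n} :
    A.rank ≤ 1 ∧ (A - single i₀ j₀ 1).rank ≤ 1 ↔
      A ∈ Set.range (vecMulVec (Pi.single i₀ 1)) ∨
        A ∈ Set.range (vecMulVec · (Pi.single j₀ 1)) := by
  constructor
  · rintro ⟨hA, hAE⟩
    by_cases h : ∃ i ≠ i₀, A.row i ≠ 0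
    · obtain ⟨i, hi, hAi⟩ := h
      exact Or.inr (exists_eq_vecMulVec_single_of_rank_le_one hi hAi hA hAE |>.imp fun _ => Eq.symm)
    · push Not at h
      refine Or.inl ⟨A.row i₀, ?_⟩
      ext i j
      by_cases hi : i = i₀
      · subst hi; simp [vecMulVec_apply]
      · simp [vecMulVec_apply, hi, show A i j = 0 from congrFun (h i hi) j]
  · rw [single_eq_single_vecMulVec_single]
    rintro (⟨r, rfl⟩ | ⟨c, rfl⟩)
    · rw [← vecMulVec_sub]
      exact ⟨rank_vecMulVec_le _ _, rank_vecMulVec_le _ _⟩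
    · rw [← sub_vecMulVec]
      exact ⟨rank_vecMulVec_le _ _, rank_vecMulVec_le _ _⟩

theorem setOf_rank_eq_one_and_rank_sub_single_eq_one (i₀ : m) (j₀ : n) :
    {A : Matrix m n F | A.rank = 1 ∧ (A - single i₀ j₀ 1).rank = 1} =
      (Set.range (vecMulVec (Pi.single i₀ 1)) ∪ Set.range (vecMulVec · (Pi.single j₀ 1))) \
        {0, single i₀ j₀ 1} := by
  ext A
  have hiff := rank_le_one_and_rank_sub_single_le_one_iff (A := A) (i₀ := i₀) (j₀ := j₀)
  simp only [Set.mem_ofPred_eq, rank_eq_one_iff, sub_ne_zero, Set.mem_sdiff, Set.mem_union,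
    Set.mem_insert_iff, Set.mem_singleton_iff]
  tauto

theorem ncard_rank_eq_one_and_rank_sub_single_eq_one [Fintype F] (i₀ : m) (j₀ : n) :
    {A : Matrix m n F | A.rank = 1 ∧ (A - single i₀ j₀ 1).rank = 1}.ncard + Fintype.card F + 2 =
      Fintype.card F ^ Fintype.card n + Fintype.card F ^ Fintype.card m := by
  rw [setOf_rank_eq_one_and_rank_sub_single_eq_one]
  set R := Set.range (vecMulVec (Pi.single i₀ (1 : F)))
  set C := Set.range (vecMulVec · (Pi.single j₀ (1 : F)))
  have hE : single i₀ j₀ (1 : F) ∈ R ∩ C := by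
    rw [range_vecMulVec_single_inter_range_vecMulVec_single]
    exact ⟨1, one_smul _ _⟩
  have h0 : (0 : Matrix m n F) ∈ R ∩ C := by
    rw [range_vecMulVec_single_inter_range_vecMulVec_single]
    exact ⟨0, zero_smul _ _⟩
  have hpair : ({0, single i₀ j₀ 1} : Set (Matrix m n F)).ncard = 2 :=
    Set.ncard_pair fun h => by simpa using congrFun (congrFun h i₀) j₀
  have hR : R.ncard = Fintype.card F ^ Fintype.card n := by
    rw [Set.ncard_range_of_injective, Nat.card_eq_fintype_card, Fintype.card_fun]
    intro r s h
    funext j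
    simpa [vecMulVec_apply] using congrFun (congrFun h i₀) j
  have hC : C.ncard = Fintype.card F ^ Fintype.card m := by
    rw [Set.ncard_range_of_injective, Nat.card_eq_fintype_card, Fintype.card_fun]
    intro c d h
    funext i
    simpa [vecMulVec_apply] using congrFun (congrFun h i) j₀
  have hRC : (R ∩ C).ncard = Fintype.card F := by
    rw [range_vecMulVec_single_inter_range_vecMulVec_single, Set.ncard_range_of_injective,
      Nat.card_eq_fintype_card]
    intro a b h
    simpa using congrFun (congrFun h i₀) j₀
  have hunion := Set.ncard_union_add_ncard_inter R C
  have hdiff := Set.ncard_sdiff_add_ncard_of_subset (s := {0, single i₀ j₀ (1 : F)}) (t := R ∪ C)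
    (Set.insert_subset (Or.inl h0.1) (Set.singleton_subset_iff.mpr (Or.inl hE.1)))
  omega

end Matrix

theorem yMat_eq_single (F : Type) [Field F] {D m : ℕ} (hD : 0 < D) (hm : 0 < m) :
    yMat F D m = single ⟨0, hD⟩ ⟨0, hm⟩ 1 := by
  ext i j
  simp [yMat, single_apply, Fin.ext_iff, eq_comm]

theorem stmt_19 (F : Type) [Field F] [Fintype F] (D N : ℕ)
    (h1 : N > 2 * D) (h2 : 2 * D ≥ 6) :
    ({w : Matrix (Fin D) (Fin (N - D)) F |
        w.rank = 1 ∧ (w - yMat F D (N - D)).rank = 1}.ncard : ℚ)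
      = (Fintype.card F : ℚ) ^ (N - D) + (Fintype.card F : ℚ) ^ D
          - (Fintype.card F : ℚ) - 2 := by
  have hD : 0 < D := by omega
  have hm : 0 < N - D := by omega
  have hcount := ncard_rank_eq_one_and_rank_sub_single_eq_one (F := F) (⟨0, hD⟩ : Fin D)
    (⟨0, hm⟩ : Fin (N - D))
  rw [← yMat_eq_single F hD hm, Fintype.card_fin, Fintype.card_fin] at hcount
  have hcast := congrArg (Nat.cast : ℕ → ℚ) hcount
  push_cast at hcast
  linarith

end
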